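/- arXiv:2112.05618 — 2 statements merged into one kernel-verified Lean document; each statement's English description precedes it below -/
import Mathlib

section
/- Let Q(x_1,...,x_m) = Σ_{I ⊆ {1,...,m}, #I = k} δ_I · Π_{i∈I} x_i be a multilinear homogeneous polynomial of degree k ≤ m over F_q, with not all coefficients δ_I zero. If Z ⊆ F_q^m is the set of zeros of Q, then #Z ≥ q^{m-k}·(q−1)^{k-1}. -/
open Finset Function

/-!
Write `Q = x_a * ∂Q/∂x_a + Q|_{x_a = 0}`. At every point where `∂Q/∂x_a` does not vanish,
exactly one value of `x_a` is a zero of `Q` and `q - 1` values are not. If `I` is a monomial of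
`Q`, maximal under inclusion among those with nonzero coefficient (for a homogeneous form, any
one is), and `a ∈ I`, then `I \ {a}` is such a monomial of `∂Q/∂x_a`. Induction on `I` gives
at least `(q-1)^#I q^(m-#I)` nonzeros of `Q`, and one more differentiation turns this into at
least `(q-1)^(#I-1) q^(m-#I)` zeros. The bounds are stated multiplied by `q^#I`, which avoids
truncated subtraction in the exponents.
-/

/-- `(y, t) ↦ (update y a t, y a)` is an involution, so the pairs `(y, t)` with
`p (update y a t)` are as many as the pairs `(z, s)` with `p z`. -/
theorem sum_card_filter_update {σ α : Type*} [Fintype σ] [DecidableEq σ] [Fintype α]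
    (p : (σ → α) → Prop) [DecidablePred p] (a : σ) :
    ∑ y : σ → α, #{t | p (update y a t)} = Fintype.card α * #{y | p y} := by
  let e : Equiv.Perm ((σ → α) × α) :=
    Involutive.toPerm (fun x => (update x.1 a x.2, x.1 a)) fun x => by simp
  calc ∑ y : σ → α, #{t | p (update y a t)}
      = ∑ x : (σ → α) × α, if p (e x).1 then 1 else 0 := by
        simp only [card_filter, Fintype.sum_prod_type]; rfl
    _ = ∑ x : (σ → α) × α, if p x.1 then 1 else 0 :=
        Equiv.sum_comp e (fun x => if p x.1 then 1 else 0)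
    _ = Fintype.card α * #{y | p y} := by
        rw [Fintype.sum_prod_type, card_filter, mul_sum]
        exact sum_congr rfl fun y _ => by split_ifs <;> simp

section LinearCount

variable {F : Type*} [Field F] [Fintype F] [DecidableEq F] {A : F} (B : F)

theorem card_filter_mul_add_eq_zero (hA : A ≠ 0) : #{t : F | t * A + B = 0} = 1 := by
  have hsol : ∀ t : F, t * A + B = 0 ↔ t = -B / A := fun t => by
    rw [eq_div_iff hA, add_eq_zero_iff_eq_neg]
  simp only [hsol, filter_eq', mem_univ, if_true, card_singleton]

theorem card_filter_mul_add_ne_zero (hA : A ≠ 0) :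
    #{t : F | t * A + B ≠ 0} = Fintype.card F - 1 := by
  have hsol : ∀ t : F, t * A + B = 0 ↔ t = -B / A := fun t => by
    rw [eq_div_iff hA, add_eq_zero_iff_eq_neg]
  rw [filter_congr fun t _ => (hsol t).not, filter_ne', card_erase_of_mem (mem_univ _), card_univ]

end LinearCount

section Multilinear

variable {σ F : Type*} [Field F]

def multilinearEval [Fintype σ] (c : Finset σ → F) (y : σ → F) : F :=
  ∑ T, c T * ∏ i ∈ T, y i

def IsMaximalMonomial (c : Finset σ → F) (I : Finset σ) : Prop :=
  c I ≠ 0 ∧ ∀ T, I ⊂ T → c T = 0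

theorem multilinearEval_eq_of_isMaximalMonomial_empty [Fintype σ] {c : Finset σ → F}
    (h : IsMaximalMonomial c ∅) (y : σ → F) : multilinearEval c y = c ∅ := by
  rw [multilinearEval, sum_eq_single ∅ (fun T _ hT => by
    rw [h.2 T (empty_ssubset.mpr (nonempty_iff_ne_empty.mpr hT)), zero_mul]) (by simp)]
  simp

variable [DecidableEq σ]

/-- The coefficients of `∂P/∂x_a`, so that `P = x_a * ∂P/∂x_a + P|_{x_a = 0}`. -/
def pderivCoeff (a : σ) (c : Finset σ → F) (T : Finset σ) : F :=
  if a ∈ T then 0 else c (insert a T)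

theorem IsMaximalMonomial.pderivCoeff_erase {c : Finset σ → F} {I : Finset σ} {a : σ}
    (h : IsMaximalMonomial c I) (ha : a ∈ I) :
    IsMaximalMonomial (pderivCoeff a c) (I.erase a) := by
  refine ⟨by simpa [pderivCoeff, insert_erase ha] using h.1, fun T hT => ?_⟩
  by_cases haT : a ∈ T
  · simp [pderivCoeff, haT]
  · rw [pderivCoeff, if_neg haT]
    refine h.2 _ ?_
    grind

variable [Fintype σ]

theorem sum_finset_eq_sum_powerset_erase {M : Type*} [AddCommMonoid M] (a : σ)
    (f : Finset σ → M) : ∑ T, f T = ∑ T ∈ (univ.erase a).powerset, (f T + f (insert a T)) := by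
  rw [sum_add_distrib, ← sum_powerset_insert (notMem_erase a univ), insert_erase (mem_univ a),
    powerset_univ]

theorem multilinearEval_update (c : Finset σ → F) (y : σ → F) (a : σ) (t : F) :
    multilinearEval c (update y a t)
      = t * multilinearEval (pderivCoeff a c) y + multilinearEval c (update y a 0) := by
  have hsplit : ∀ s : F, multilinearEval c (update y a s)
      = ∑ T ∈ (univ.erase a).powerset, c T * ∏ i ∈ T, y i
        + s * ∑ T ∈ (univ.erase a).powerset, c (insert a T) * ∏ i ∈ T, y i := fun s => by
    rw [multilinearEval, sum_finset_eq_sum_powerset_erase a, mul_sum, ← sum_add_distrib]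
    refine sum_congr rfl fun T hT => ?_
    have haT : a ∉ T := fun h => notMem_erase a univ (mem_powerset.mp hT h)
    rw [prod_update_of_notMem haT, prod_insert haT, update_self, prod_update_of_notMem haT]
    ring
  have hderiv : multilinearEval (pderivCoeff a c) y
      = ∑ T ∈ (univ.erase a).powerset, c (insert a T) * ∏ i ∈ T, y i := by
    rw [multilinearEval, sum_finset_eq_sum_powerset_erase a]
    refine sum_congr rfl fun T hT => ?_
    have haT : a ∉ T := fun h => notMem_erase a univ (mem_powerset.mp hT h)
    simp [pderivCoeff, haT]
  rw [hsplit t, hsplit 0, hderiv]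
  ring

variable [Fintype F] [DecidableEq F]

local notation "q" => Fintype.card F

theorem card_pderivCoeff_ne_zero_le (a : σ) (c : Finset σ → F) :
    (q - 1) * #{y | multilinearEval (pderivCoeff a c) y ≠ 0}
      ≤ q * #{y | multilinearEval c y ≠ 0} := by
  rw [← sum_card_filter_update, mul_comm, ← smul_eq_mul, ← sum_const]
  calc ∑ y ∈ {y | multilinearEval (pderivCoeff a c) y ≠ 0}, (q - 1)
      = ∑ y ∈ {y | multilinearEval (pderivCoeff a c) y ≠ 0},
          #{t | multilinearEval c (update y a t) ≠ 0} := sum_congr rfl fun y hy => by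
        rw [← card_filter_mul_add_ne_zero (multilinearEval c (update y a 0)) (mem_filter.mp hy).2]
        exact congrArg card (filter_congr fun t _ => by rw [multilinearEval_update c y a t])
    _ ≤ _ := sum_le_sum_of_subset (filter_subset _ _)

theorem card_pderivCoeff_ne_zero_le_card_eq_zero (a : σ) (c : Finset σ → F) :
    #{y | multilinearEval (pderivCoeff a c) y ≠ 0} ≤ q * #{y | multilinearEval c y = 0} := by
  rw [← sum_card_filter_update, card_eq_sum_ones]
  calc ∑ y ∈ {y | multilinearEval (pderivCoeff a c) y ≠ 0}, 1
      = ∑ y ∈ {y | multilinearEval (pderivCoeff a c) y ≠ 0},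
          #{t | multilinearEval c (update y a t) = 0} := sum_congr rfl fun y hy => by
        rw [← card_filter_mul_add_eq_zero (multilinearEval c (update y a 0)) (mem_filter.mp hy).2]
        exact congrArg card (filter_congr fun t _ => by rw [multilinearEval_update c y a t])
    _ ≤ _ := sum_le_sum_of_subset (filter_subset _ _)

theorem IsMaximalMonomial.le_card_ne_zero {c : Finset σ → F} {I : Finset σ}
    (h : IsMaximalMonomial c I) :
    (q - 1) ^ #I * q ^ Fintype.card σ ≤ q ^ #I * #{y | multilinearEval c y ≠ 0} := by
  induction I using Finset.induction_on generalizing c with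
  | empty =>
    simp [multilinearEval_eq_of_isMaximalMonomial_empty h, h.1]
  | insert a s ha ih =>
    have hA := ih (erase_insert ha ▸ h.pderivCoeff_erase (mem_insert_self a s))
    rw [card_insert_of_notMem ha]
    calc (q - 1) ^ (#s + 1) * q ^ Fintype.card σ
        = (q - 1) * ((q - 1) ^ #s * q ^ Fintype.card σ) := by ring
      _ ≤ (q - 1) * (q ^ #s * #{y | multilinearEval (pderivCoeff a c) y ≠ 0}) := by gcongr
      _ = q ^ #s * ((q - 1) * #{y | multilinearEval (pderivCoeff a c) y ≠ 0}) := by ring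
      _ ≤ q ^ #s * (q * #{y | multilinearEval c y ≠ 0}) :=
        Nat.mul_le_mul_left _ (card_pderivCoeff_ne_zero_le a c)
      _ = q ^ (#s + 1) * #{y | multilinearEval c y ≠ 0} := by ring

theorem IsMaximalMonomial.le_card_eq_zero {c : Finset σ → F} {I : Finset σ}
    (h : IsMaximalMonomial c I) (hI : I.Nonempty) :
    (q - 1) ^ (#I - 1) * q ^ Fintype.card σ ≤ q ^ #I * #{y | multilinearEval c y = 0} := by
  obtain ⟨a, ha⟩ := hI
  have hA := (h.pderivCoeff_erase ha).le_card_ne_zero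
  rw [card_erase_of_mem ha] at hA
  calc (q - 1) ^ (#I - 1) * q ^ Fintype.card σ
      ≤ q ^ (#I - 1) * #{y | multilinearEval (pderivCoeff a c) y ≠ 0} := hA
    _ ≤ q ^ (#I - 1) * (q * #{y | multilinearEval c y = 0}) :=
      Nat.mul_le_mul_left _ (card_pderivCoeff_ne_zero_le_card_eq_zero a c)
    _ = q ^ #I * #{y | multilinearEval c y = 0} := by
      rw [← mul_assoc, ← pow_succ, Nat.sub_add_cancel (card_pos.mpr ⟨a, ha⟩)]

end Multilinear

/-- Lower bound on the number of zeros of a nonzero multilinear homogeneous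
polynomial of degree `k ≤ m` over a finite field with `q` elements:
`#Z ≥ q^(m-k) * (q-1)^(k-1)`. -/
theorem zero_set_lower_bound (F : Type) [Field F] [Fintype F] [DecidableEq F]
    (q : ℕ) (hq : q = Fintype.card F)
    (m k : ℕ) (hk : 1 ≤ k) (hkm : k ≤ m)
    (δ : Finset (Fin m) → F)
    (hδ : ∃ I : Finset (Fin m), I.card = k ∧ δ I ≠ 0) :
    q ^ (m - k) * (q - 1) ^ (k - 1)
      ≤ (Finset.univ.filter (fun y : Fin m → F =>
          ∑ I ∈ Finset.univ.filter (fun I : Finset (Fin m) => I.card = k),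
            δ I * ∏ i ∈ I, y i = 0)).card := by
  subst hq
  obtain ⟨I, hIk, hδI⟩ := hδ
  set c : Finset (Fin m) → F := fun T => if #T = k then δ T else 0
  have hQ : ∀ y : Fin m → F,
      ∑ T ∈ univ.filter (fun T : Finset (Fin m) => #T = k), δ T * ∏ i ∈ T, y i
        = multilinearEval c y := fun y => by
    simp only [sum_filter, multilinearEval, c, ite_mul, zero_mul]
  have hc : IsMaximalMonomial c I :=
    ⟨by simp [c, hIk, hδI], fun T hT => if_neg (hIk ▸ card_lt_card hT).ne'⟩
  have hbound := hc.le_card_eq_zero (card_pos.mp (hIk ▸ hk))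
  simp only [hIk, Fintype.card_fin, ← hQ] at hbound
  refine Nat.le_of_mul_le_mul_left ?_ (pow_pos (Fintype.card_pos (α := F)) k)
  rwa [← mul_assoc, pow_mul_pow_sub _ hkm, mul_comm]
end

section
/- Let Q_1,...,Q_N be N multilinear homogeneous polynomials over F_q, each of degree k ≤ m in variables x_1,...,x_m and each with not all coefficients zero. If N ≥ 1 + q·(q/(q−1))^{k-1}, then there exist indices 1 ≤ i ≠ j ≤ N such that Q_i and Q_j have a common zero in F_q^m. -/
/-!
Write a nonzero homogeneous multilinear form `P` of degree `d` as `P = xᵢ A + B`, where `xᵢ`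
occurs in a monomial with nonzero coefficient; then `A` is a nonzero form of degree `d - 1`, and
neither `A` nor `B` involves `xᵢ`. On every line parallel to the `i`-th axis on which `A ≠ 0`,
`P` is a nonconstant affine function of `xᵢ`, with one zero and `q - 1` nonzeros. By induction
on `d`, a nonzero form of degree `d` in `n` variables has at least `q^(n-d) (q-1)^d` nonzeros,
so for `d ≥ 1` it has at least `q^(n-d) (q-1)^(d-1)` zeros. If the zero sets of the `Qₜ` were
pairwise disjoint, then `N q^(m-k) (q-1)^(k-1) ≤ q^m`, which the bound on `N` excludes.
-/

open Finset Function

section Fibers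

variable {ι F : Type*} [Fintype ι] [DecidableEq ι] [Fintype F]

theorem card_filter_mul_card_eq_sum_card_filter_update (i : ι) (p : (ι → F) → Prop)
    [DecidablePred p] :
    #{y | p y} * Fintype.card F = ∑ z : ι → F, #{v | p (update z i v)} := by
  -- `(z, v) ↦ (update z i v, z i)` is an involution of `(ι → F) × F`.
  let σ : Equiv.Perm ((ι → F) × F) :=
    Involutive.toPerm (fun x => (update x.1 i x.2, x.1 i)) fun x => by simp
  calc #{y | p y} * Fintype.card F
      = ∑ x : (ι → F) × F, if p x.1 then 1 else 0 := by
        rw [card_filter, sum_mul, Fintype.sum_prod_type]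
        refine sum_congr rfl fun y _ => ?_
        split_ifs <;> simp
    _ = ∑ x : (ι → F) × F, if p (σ x).1 then 1 else 0 :=
        (Equiv.sum_comp σ fun x => if p x.1 then 1 else 0).symm
    _ = ∑ z : ι → F, #{v | p (update z i v)} := by
        simp only [Fintype.sum_prod_type, card_filter]
        rfl

end Fibers

section Affine

variable {F : Type*} [Field F] [Fintype F] [DecidableEq F]

theorem filter_mul_add_eq_zero {a : F} (b : F) (ha : a ≠ 0) :
    ({v | v * a + b = 0} : Finset F) = {-b / a} := by
  ext v
  simp [eq_div_iff ha, add_eq_zero_iff_eq_neg]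

theorem card_filter_mul_add_ne_zero_s11 {a : F} (b : F) (ha : a ≠ 0) :
    #{v : F | v * a + b ≠ 0} = Fintype.card F - 1 := by
  rw [filter_not, card_sdiff_of_subset (filter_subset _ _), filter_mul_add_eq_zero b ha,
    card_singleton, card_univ]

variable {ι : Type*} [Fintype ι] [DecidableEq ι]

theorem card_filter_ne_zero_le_of_update_eq_mul_add (i : ι) {f a b : (ι → F) → F}
    (hf : ∀ y v, f (update y i v) = v * a y + b y) :
    #{y | a y ≠ 0} ≤ #{y | f y = 0} * Fintype.card F := by
  rw [card_filter_mul_card_eq_sum_card_filter_update i, card_filter]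
  refine sum_le_sum fun z _ => ?_
  split_ifs with hz
  · simp [hf, filter_mul_add_eq_zero _ hz]
  · exact Nat.zero_le _

theorem mul_card_filter_ne_zero_le_of_update_eq_mul_add (i : ι) {f a b : (ι → F) → F}
    (hf : ∀ y v, f (update y i v) = v * a y + b y) :
    (Fintype.card F - 1) * #{y | a y ≠ 0} ≤ #{y | f y ≠ 0} * Fintype.card F := by
  rw [card_filter_mul_card_eq_sum_card_filter_update i, card_filter, mul_sum]
  refine sum_le_sum fun z _ => ?_
  split_ifs with hz
  · simp [hf, card_filter_mul_add_ne_zero_s11 _ hz]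
  · simp

end Affine

section MultilinearForm

variable {ι F : Type*} [DecidableEq ι] [CommRing F]

def multilinearForm (s : Finset ι) (d : ℕ) (c : Finset ι → F) (y : ι → F) : F :=
  ∑ I ∈ s.powersetCard d, c I * ∏ a ∈ I, y a

theorem multilinearForm_update_of_notMem {s : Finset ι} {i : ι} (hi : i ∉ s) (d : ℕ)
    (c : Finset ι → F) (y : ι → F) (v : F) :
    multilinearForm s d c (update y i v) = multilinearForm s d c y := by
  refine sum_congr rfl fun I hI => ?_
  exact congrArg _ <| prod_congr rfl fun a ha =>
    update_of_ne (ne_of_mem_of_not_mem ((mem_powersetCard.1 hI).1 ha) hi) _ _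

theorem multilinearForm_insert {s : Finset ι} {i : ι} (hi : i ∉ s) (d : ℕ)
    (c : Finset ι → F) (y : ι → F) :
    multilinearForm (insert i s) (d + 1) c y =
      y i * multilinearForm s d (fun J => c (insert i J)) y + multilinearForm s (d + 1) c y := by
  have hinj : Set.InjOn (insert i) (s.powersetCard d : Set (Finset ι)) := fun J hJ K hK h => by
    rw [← erase_insert (notMem_mono (mem_powersetCard.1 hJ).1 hi),
      ← erase_insert (notMem_mono (mem_powersetCard.1 hK).1 hi), h]
  have hdisj : Disjoint (s.powersetCard (d + 1)) ((s.powersetCard d).image (insert i)) := by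
    refine disjoint_left.2 fun I hI hI' => ?_
    obtain ⟨J, -, rfl⟩ := mem_image.1 hI'
    exact hi ((mem_powersetCard.1 hI).1 (mem_insert_self i J))
  rw [multilinearForm, powersetCard_succ_insert hi, sum_union hdisj, sum_image hinj, add_comm,
    multilinearForm, multilinearForm, mul_sum]
  congr 1
  refine sum_congr rfl fun J hJ => ?_
  rw [prod_insert (notMem_mono (mem_powersetCard.1 hJ).1 hi)]
  ring

theorem multilinearForm_update_of_mem {s : Finset ι} {i : ι} (hi : i ∈ s) (d : ℕ)
    (c : Finset ι → F) (y : ι → F) (v : F) :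
    multilinearForm s (d + 1) c (update y i v) =
      v * multilinearForm (s.erase i) d (fun J => c (insert i J)) y +
        multilinearForm (s.erase i) (d + 1) c y := by
  have h := multilinearForm_insert (notMem_erase i s) d c (update y i v)
  rw [insert_erase hi] at h
  rw [h, update_self, multilinearForm_update_of_notMem (notMem_erase i s),
    multilinearForm_update_of_notMem (notMem_erase i s)]

end MultilinearForm

section Count

variable {ι F : Type*} [Fintype ι] [DecidableEq ι] [Field F] [Fintype F] [DecidableEq F]

theorem pow_mul_pow_le_card_multilinearForm_ne_zero {s I : Finset ι} {d : ℕ}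
    {c : Finset ι → F} (hIs : I ⊆ s) (hI : #I = d) (hc : c I ≠ 0) :
    Fintype.card F ^ (Fintype.card ι - d) * (Fintype.card F - 1) ^ d ≤
      #{y | multilinearForm s d c y ≠ 0} := by
  induction d generalizing s c I with
  | zero =>
    obtain rfl := card_eq_zero.1 hI
    simp [multilinearForm, hc]
  | succ d ih =>
    obtain ⟨i, hi⟩ := card_pos.1 (by omega : 0 < #I)
    have hA := ih (c := fun J => c (insert i J)) (erase_subset_erase i hIs)
      (by rw [card_erase_of_mem hi, hI, Nat.add_sub_cancel]) (by rwa [insert_erase hi])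
    have hf := mul_card_filter_ne_zero_le_of_update_eq_mul_add i
      (multilinearForm_update_of_mem (hIs hi) d c)
    have hn : Fintype.card ι - d = Fintype.card ι - (d + 1) + 1 := by
      have := hI ▸ card_le_univ I
      omega
    refine Nat.le_of_mul_le_mul_right ?_ (Fintype.card_pos (α := F))
    calc _ = (Fintype.card F - 1) *
          (Fintype.card F ^ (Fintype.card ι - d) * (Fintype.card F - 1) ^ d) := by
          rw [hn]; ring
      _ ≤ _ := (Nat.mul_le_mul_left _ hA).trans hf

theorem pow_mul_pow_le_card_multilinearForm_eq_zero {s I : Finset ι} {d : ℕ}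
    {c : Finset ι → F} (hIs : I ⊆ s) (hI : #I = d + 1) (hc : c I ≠ 0) :
    Fintype.card F ^ (Fintype.card ι - (d + 1)) * (Fintype.card F - 1) ^ d ≤
      #{y | multilinearForm s (d + 1) c y = 0} := by
  obtain ⟨i, hi⟩ := card_pos.1 (by omega : 0 < #I)
  have hA := pow_mul_pow_le_card_multilinearForm_ne_zero (c := fun J => c (insert i J))
    (erase_subset_erase i hIs) (by rw [card_erase_of_mem hi, hI, Nat.add_sub_cancel])
    (by rwa [insert_erase hi])
  have hf := card_filter_ne_zero_le_of_update_eq_mul_add i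
    (multilinearForm_update_of_mem (hIs hi) d c)
  have hn : Fintype.card ι - d = Fintype.card ι - (d + 1) + 1 := by
    have := hI ▸ card_le_univ I
    omega
  refine Nat.le_of_mul_le_mul_right ?_ (Fintype.card_pos (α := F))
  calc _ = Fintype.card F ^ (Fintype.card ι - d) * (Fintype.card F - 1) ^ d := by
        rw [hn]; ring
    _ ≤ _ := hA.trans hf

end Count

theorem pow_lt_mul_of_one_add_mul_div_pow_le {q m k N : ℕ} (hq : 1 < q) (hk : 1 ≤ k)
    (hkm : k ≤ m) (hN : (1 : ℝ) + q * ((q : ℝ) / ((q : ℝ) - 1)) ^ (k - 1) ≤ N) :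
    q ^ m < N * (q ^ (m - k) * (q - 1) ^ (k - 1)) := by
  have hq' : (0 : ℝ) < q - 1 := by
    rw [sub_pos]; exact_mod_cast hq
  set L : ℝ := (q : ℝ) ^ (m - k) * ((q : ℝ) - 1) ^ (k - 1)
  have hL : 0 < L := by positivity
  have hqm : (q : ℝ) * ((q : ℝ) / ((q : ℝ) - 1)) ^ (k - 1) * L = (q : ℝ) ^ m := by
    rw [div_pow, show m = (m - k) + (k - 1) + 1 by omega]
    field_simp
    ring
  have hlt : (q : ℝ) ^ m < N * L := calc
    (q : ℝ) ^ m < L + q ^ m := by linarith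
    _ = (1 + q * ((q : ℝ) / ((q : ℝ) - 1)) ^ (k - 1)) * L := by rw [← hqm]; ring
    _ ≤ N * L := mul_le_mul_of_nonneg_right hN hL.le
  exact_mod_cast (by push_cast [Nat.cast_sub hq.le]; exact hlt :
    ((q ^ m : ℕ) : ℝ) < ((N * (q ^ (m - k) * (q - 1) ^ (k - 1)) : ℕ) : ℝ))

theorem exists_ne_not_disjoint_of_card_lt_sum_card {α ι : Type*} [Fintype α] [DecidableEq α]
    {s : Finset ι} {Z : ι → Finset α} (h : Fintype.card α < ∑ t ∈ s, #(Z t)) :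
    ∃ i ∈ s, ∃ j ∈ s, i ≠ j ∧ ¬Disjoint (Z i) (Z j) := by
  by_contra! hZ
  rw [← card_biUnion hZ] at h
  exact h.not_ge (card_le_univ _)

theorem common_zero_exists_general (F : Type) [Field F] [Fintype F]
    (q : ℕ) (hq : q = Fintype.card F)
    (m k : ℕ) (hk : 1 ≤ k) (hkm : k ≤ m)
    (N : ℕ) (δ : Fin N → Finset (Fin m) → F)
    (hδ : ∀ t : Fin N, ∃ I : Finset (Fin m), I.card = k ∧ δ t I ≠ 0)
    (hN : (1 : ℝ) + q * ((q : ℝ) / ((q : ℝ) - 1)) ^ (k - 1) ≤ N) :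
    ∃ i j : Fin N, i ≠ j ∧ ∃ y : Fin m → F,
      (∑ I ∈ Finset.univ.filter (fun I : Finset (Fin m) => I.card = k),
          δ i I * ∏ a ∈ I, y a = 0) ∧
      (∑ I ∈ Finset.univ.filter (fun I : Finset (Fin m) => I.card = k),
          δ j I * ∏ a ∈ I, y a = 0) := by
  classical
  subst hq
  let Z : Fin N → Finset (Fin m → F) := fun t => {y | multilinearForm univ k (δ t) y = 0}
  have hZ (t : Fin N) :
      Fintype.card F ^ (m - k) * (Fintype.card F - 1) ^ (k - 1) ≤ #(Z t) := by
    obtain ⟨I, hI, hc⟩ := hδ t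
    obtain ⟨d, rfl⟩ : ∃ d, k = d + 1 := ⟨k - 1, by omega⟩
    simpa using pow_mul_pow_le_card_multilinearForm_eq_zero (subset_univ I) hI hc
  have hcard : Fintype.card (Fin m → F) < ∑ t, #(Z t) := calc
    Fintype.card (Fin m → F) = Fintype.card F ^ m := by simp
    _ < N * (Fintype.card F ^ (m - k) * (Fintype.card F - 1) ^ (k - 1)) :=
      pow_lt_mul_of_one_add_mul_div_pow_le Fintype.one_lt_card hk hkm hN
    _ ≤ ∑ t, #(Z t) := by simpa using card_nsmul_le_sum univ _ _ fun t _ => hZ t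
  obtain ⟨i, -, j, -, hij, hZij⟩ := exists_ne_not_disjoint_of_card_lt_sum_card hcard
  obtain ⟨y, hyi, hyj⟩ := not_disjoint_iff.1 hZij
  simp only [Z, mem_filter_univ] at hyi hyj
  simp only [univ_filter_card_eq]
  exact ⟨i, j, hij, y, hyi, hyj⟩

/-- Proposition 1: if `Q₁,…,Q_N` are nonzero multilinear homogeneous polynomials
of degree `k ≤ m` over `F_q` and `N ≥ 1 + q·(q/(q−1))^(k−1)`, then some two of
them have a common zero. -/
theorem common_zero_exists (F : Type) [Field F] [Fintype F] [DecidableEq F]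
    (q : ℕ) (hq : q = Fintype.card F)
    (m k : ℕ) (hk : 1 ≤ k) (hkm : k ≤ m)
    (N : ℕ) (δ : Fin N → Finset (Fin m) → F)
    (hδ : ∀ t : Fin N, ∃ I : Finset (Fin m), I.card = k ∧ δ t I ≠ 0)
    (hN : (1 : ℝ) + q * ((q : ℝ) / ((q : ℝ) - 1)) ^ (k - 1) ≤ N) :
    ∃ i j : Fin N, i ≠ j ∧ ∃ y : Fin m → F,
      (∑ I ∈ Finset.univ.filter (fun I : Finset (Fin m) => I.card = k),
          δ i I * ∏ a ∈ I, y a = 0) ∧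
      (∑ I ∈ Finset.univ.filter (fun I : Finset (Fin m) => I.card = k),
          δ j I * ∏ a ∈ I, y a = 0) :=
  common_zero_exists_general F q hq m k hk hkm N δ hδ hN
end
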